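/- Let (X_i, (p_{ij}, e_{ij}))_{i⊑j∈I} be an ep-system in Top with projective limit X, (p_i). Given continuous valuations ν_i on X_i with ν_i = p_{ij}[ν_j] for all i ⊑ j, there is a unique continuous valuation ν on X with ν_i = p_i[ν] for every i; it is given by ν(U) = sup_{i∈I} ν_i(e_i^{-1}(U)), and this supremum is directed. -/
import Mathlib


open Set

universe u v

/-- Specialization preorder: `x ≤ y` iff every open set containing `x` contains `y`. -/
def specLE {X : Type*} [TopologicalSpace X] (x y : X) : Prop :=
  ∀ U : Set X, IsOpen U → x ∈ U → y ∈ U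

/-- Saturated = upward closed in the specialization preorder. -/
def IsSaturatedSet {X : Type*} [TopologicalSpace X] (A : Set X) : Prop :=
  ∀ x ∈ A, ∀ y, specLE x y → y ∈ A

/-- Upward closure in the specialization preorder. -/
def upClo {X : Type*} [TopologicalSpace X] (A : Set X) : Set X :=
  { y | ∃ x ∈ A, specLE x y }

/-- Monotonicity on open sets. -/
def MonoOnOpens {X : Type*} [TopologicalSpace X] (ν : Set X → ENNReal) : Prop :=
  ∀ U V : Set X, IsOpen U → IsOpen V → U ⊆ V → ν U ≤ ν V

/-- Scott continuity on the lattice of open sets. -/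
def ScottContOnOpens {X : Type*} [TopologicalSpace X] (ν : Set X → ENNReal) : Prop :=
  MonoOnOpens ν ∧
  ∀ S : Set (Set X), S.Nonempty → (∀ U ∈ S, IsOpen U) → DirectedOn (· ⊆ ·) S →
    ν (⋃₀ S) = ⨆ U ∈ S, ν U

/-- Valuation: strict, monotone, modular on opens. -/
def IsValuation {X : Type*} [TopologicalSpace X] (ν : Set X → ENNReal) : Prop :=
  ν ∅ = 0 ∧ MonoOnOpens ν ∧
  ∀ U V : Set X, IsOpen U → IsOpen V → ν (U ∪ V) + ν (U ∩ V) = ν U + ν V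

/-- Continuous valuation. -/
def IsContValuation {X : Type*} [TopologicalSpace X] (ν : Set X → ENNReal) : Prop :=
  IsValuation ν ∧ ScottContOnOpens ν

/-- `ν^•(Q)`: infimum of `ν` over open neighborhoods of `Q`. -/
noncomputable def nuBullet {X : Type*} [TopologicalSpace X] (ν : Set X → ENNReal)
    (Q : Set X) : ENNReal :=
  ⨅ U ∈ {U : Set X | IsOpen U ∧ Q ⊆ U}, ν U

/-- `μ^∘(U)`: supremum of `μ` over compact saturated subsets of `U`. -/
noncomputable def muCirc {X : Type*} [TopologicalSpace X] (μ : Set X → ENNReal)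
    (U : Set X) : ENNReal :=
  ⨆ Q ∈ {Q : Set X | IsCompact Q ∧ IsSaturatedSet Q ∧ Q ⊆ U}, μ Q

/-- Tightness of a map on opens (`r ≪ s` in `[0,∞]` iff `r = 0` or `r < s`). -/
def TightMap {X : Type*} [TopologicalSpace X] (ν : Set X → ENNReal) : Prop :=
  ∀ U : Set X, IsOpen U → ∀ r : ENNReal, (r = 0 ∨ r < ν U) →
    ∃ Q : Set X, IsCompact Q ∧ IsSaturatedSet Q ∧ Q ⊆ U ∧ r ≤ nuBullet ν Q

/-- The canonical projective limit of a projective system of topological spaces. -/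
abbrev projLim {I : Type u} [Preorder I] (X : I → Type v) [∀ i, TopologicalSpace (X i)]
    (p : ∀ i j : I, i ≤ j → X j → X i) : Type (max u v) :=
  { x : ∀ i, X i // ∀ (i j : I) (h : i ≤ j), p i j h (x j) = x i }

lemma specLE_map {Y Z : Type*} [TopologicalSpace Y] [TopologicalSpace Z]
    (f : Y → Z) (hf : Continuous f) (x y : Y) (hxy : specLE x y) :
    specLE (f x) (f y) := fun V hV hx => hxy (f ⁻¹' V) (hV.preimage hf) hx

/-- projective limits of continuous valuations along ep-systems exist,
are unique, and are given by ν(U) = sup_i ν_i(e_i⁻¹(U)), a directed supremum. -/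
theorem stmt8 {I : Type u} [Preorder I] [IsDirected I (· ≤ ·)] [Nonempty I]
    (X : I → Type v) [∀ i, TopologicalSpace (X i)]
    (p : ∀ i j : I, i ≤ j → X j → X i)
    (hpcont : ∀ (i j : I) (h : i ≤ j), Continuous (p i j h))
    (hpid : ∀ (i : I) (x : X i), p i i le_rfl x = x)
    (hpcomp : ∀ (i j k : I) (hij : i ≤ j) (hjk : j ≤ k) (x : X k),
      p i j hij (p j k hjk x) = p i k (hij.trans hjk) x)
    (e : ∀ i j : I, i ≤ j → X i → X j)
    (hecont : ∀ (i j : I) (h : i ≤ j), Continuous (e i j h))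
    (heid : ∀ (i : I) (x : X i), e i i le_rfl x = x)
    (hecomp : ∀ (i j k : I) (hij : i ≤ j) (hjk : j ≤ k) (x : X i),
      e j k hjk (e i j hij x) = e i k (hij.trans hjk) x)
    (hpe : ∀ (i j : I) (h : i ≤ j) (x : X i), p i j h (e i j h x) = x)
    (hep : ∀ (i j : I) (h : i ≤ j) (y : X j), specLE (e i j h (p i j h y)) y)
    (E : ∀ i : I, X i → projLim X p)
    (hEcont : ∀ i : I, Continuous (E i))
    (hpE : ∀ (i : I) (x : X i), (E i x).1 i = x)
    (hEp : ∀ (i : I) (z : projLim X p), specLE (E i (z.1 i)) z)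
    (hEe : ∀ (i j : I) (h : i ≤ j) (x : X i), E j (e i j h x) = E i x)
    (ν : ∀ i : I, Set (X i) → ENNReal)
    (hν : ∀ i, IsContValuation (ν i))
    (hcompat : ∀ (i j : I) (h : i ≤ j) (V : Set (X i)), IsOpen V →
      ν i V = ν j (p i j h ⁻¹' V)) :
    ∃ νL : Set (projLim X p) → ENNReal, IsContValuation νL ∧
      (∀ (i : I) (V : Set (X i)), IsOpen V →
        ν i V = νL ((fun z : projLim X p => z.1 i) ⁻¹' V)) ∧
      (∀ U : Set (projLim X p), IsOpen U → νL U = ⨆ i : I, ν i (E i ⁻¹' U)) ∧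
      (∀ U : Set (projLim X p), IsOpen U → ∀ (i j : I), i ≤ j →
        ν i (E i ⁻¹' U) ≤ ν j (E j ⁻¹' U)) ∧
      ∀ νL' : Set (projLim X p) → ENNReal, IsContValuation νL' →
        (∀ (i : I) (V : Set (X i)), IsOpen V →
          ν i V = νL' ((fun z : projLim X p => z.1 i) ⁻¹' V)) →
        ∀ U : Set (projLim X p), IsOpen U → νL' U = νL U := by
  classical
  set π : ∀ i : I, projLim X p → X i := fun i z => z.1 i with hπ
  have hπcont : ∀ i, Continuous (π i) := fun i =>
    (continuous_apply i).comp continuous_subtype_val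
  -- monotonicity in the index
  have hidx : ∀ (U : Set (projLim X p)), IsOpen U → ∀ (i j : I) (h : i ≤ j),
      ν i (E i ⁻¹' U) ≤ ν j (E j ⁻¹' U) := by
    intro U hU i j h
    have h1 : E i ⁻¹' U = e i j h ⁻¹' (E j ⁻¹' U) := by
      ext x; simp [Set.mem_preimage, hEe i j h x]
    have h2 : p i j h ⁻¹' (e i j h ⁻¹' (E j ⁻¹' U)) ⊆ E j ⁻¹' U := by
      intro y hy
      exact hep i j h y (E j ⁻¹' U) (hU.preimage (hEcont j)) hy
    calc ν i (E i ⁻¹' U) = ν j (p i j h ⁻¹' (e i j h ⁻¹' (E j ⁻¹' U))) := by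
          rw [h1]
          exact hcompat i j h _ ((hU.preimage (hEcont j)).preimage (hecont i j h))
      _ ≤ ν j (E j ⁻¹' U) :=
          (hν j).1.2.1 _ _ (((hU.preimage (hEcont j)).preimage
            (hecont i j h)).preimage (hpcont i j h)) (hU.preimage (hEcont j)) h2
  -- the candidate valuation
  set νL : Set (projLim X p) → ENNReal := fun A => ⨆ i : I, ν i (E i ⁻¹' A) with hνL
  -- monotone family of approximating open sets
  have hsub : ∀ (U : Set (projLim X p)), IsOpen U → ∀ i : I,
      π i ⁻¹' (E i ⁻¹' U) ⊆ U := by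
    intro U hU i z hz
    exact hEp i z U hU hz
  have hmonoset : ∀ (U : Set (projLim X p)), IsOpen U → ∀ (i j : I), i ≤ j →
      π i ⁻¹' (E i ⁻¹' U) ⊆ π j ⁻¹' (E j ⁻¹' U) := by
    intro U hU i j h z hz
    have h1 : E i (z.1 i) ∈ U := hz
    have h2 : E i (z.1 i) = E j (e i j h (z.1 i)) := (hEe i j h _).symm
    have h3 : specLE (e i j h (p i j h (z.1 j))) (z.1 j) := hep i j h (z.1 j)
    have h3' : specLE (e i j h (z.1 i)) (z.1 j) := by
      rw [← z.2 i j h]; exact h3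
    have h4 : specLE (E j (e i j h (z.1 i))) (E j (z.1 j)) :=
      specLE_map (E j) (hEcont j) (e i j h (z.1 i)) (z.1 j) h3'
    exact h4 U hU (h2 ▸ h1)
  have hcover : ∀ (U : Set (projLim X p)), IsOpen U →
      U = ⋃ i : I, π i ⁻¹' (E i ⁻¹' U) := by
    intro U hU
    apply Set.Subset.antisymm
    · intro z hz
      obtain ⟨W, hW, hWU⟩ := isOpen_induced_iff.mp hU
      have hzW : z.1 ∈ W := by rw [← hWU] at hz; exact hz
      obtain ⟨F, u, hu, hpi⟩ := isOpen_pi_iff.mp hW z.1 hzW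
      obtain ⟨k, hk⟩ := F.exists_le
      refine Set.mem_iUnion.2 ⟨k, ?_⟩
      have hmem : (E k (z.1 k)).1 ∈ (F : Set I).pi u := by
        intro j hj
        have hjk : j ≤ k := hk j hj
        have : (E k (z.1 k)).1 j = z.1 j := by
          have h1 := (E k (z.1 k)).2 j k hjk
          rw [hpE k (z.1 k)] at h1
          rw [← h1, z.2 j k hjk]
        rw [this]
        exact (hu j hj).2
      have : (E k (z.1 k)).1 ∈ W := hpi hmem
      show E k (z.1 k) ∈ U
      rw [← hWU]; exact this
    · exact Set.iUnion_subset fun i => hsub U hU i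
  -- projection property
  have hprojP : ∀ (i : I) (V : Set (X i)), IsOpen V → ν i V = νL (π i ⁻¹' V) := by
    intro i V hV
    have hterm : ∀ (j : I), i ≤ j → ν j (E j ⁻¹' (π i ⁻¹' V)) = ν i V := by
      intro j h
      have h1 : E j ⁻¹' (π i ⁻¹' V) = p i j h ⁻¹' V := by
        ext x
        have h2 : (E j x).1 i = p i j h x := by
          have h3 := (E j x).2 i j h
          rw [hpE j x] at h3
          exact h3.symm
        simp [Set.mem_preimage, π, h2]
      rw [h1, ← hcompat i j h V hV]
    have hopen : IsOpen (π i ⁻¹' V) := hV.preimage (hπcont i)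
    apply le_antisymm
    · have : ν i (E i ⁻¹' (π i ⁻¹' V)) = ν i V := hterm i le_rfl
      rw [← this]
      exact le_iSup (fun j => ν j (E j ⁻¹' (π i ⁻¹' V))) i
    · apply iSup_le
      intro j
      obtain ⟨k, hik, hjk⟩ := directed_of (· ≤ ·) i j
      calc ν j (E j ⁻¹' (π i ⁻¹' V)) ≤ ν k (E k ⁻¹' (π i ⁻¹' V)) :=
            hidx _ hopen j k hjk
        _ = ν i V := hterm k hik
  -- νL is a continuous valuation
  have hmonoL : MonoOnOpens νL := by
    intro U V hU hV hUV
    exact iSup_mono fun i => (hν i).1.2.1 _ _ (hU.preimage (hEcont i))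
      (hV.preimage (hEcont i)) (Set.preimage_mono hUV)
  have hvalL : IsValuation νL := by
    refine ⟨?_, hmonoL, ?_⟩
    · simp [νL, (fun i => (hν i).1.1)]
    · intro U V hU hV
      have h1 : ∀ i j : I, ∃ k, ν i (E i ⁻¹' (U ∪ V)) + ν j (E j ⁻¹' (U ∩ V)) ≤
          ν k (E k ⁻¹' (U ∪ V)) + ν k (E k ⁻¹' (U ∩ V)) := by
        intro i j
        obtain ⟨k, hik, hjk⟩ := directed_of (· ≤ ·) i j
        exact ⟨k, add_le_add (hidx _ (hU.union hV) i k hik)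
          (hidx _ (hU.inter hV) j k hjk)⟩
      have h2 : ∀ i j : I, ∃ k, ν i (E i ⁻¹' U) + ν j (E j ⁻¹' V) ≤
          ν k (E k ⁻¹' U) + ν k (E k ⁻¹' V) := by
        intro i j
        obtain ⟨k, hik, hjk⟩ := directed_of (· ≤ ·) i j
        exact ⟨k, add_le_add (hidx _ hU i k hik) (hidx _ hV j k hjk)⟩
      show (⨆ i, _) + (⨆ i, _) = (⨆ i, _) + (⨆ i, _)
      rw [ENNReal.iSup_add_iSup h1, ENNReal.iSup_add_iSup h2]
      congr 1
      funext i
      have := (hν i).1.2.2 (E i ⁻¹' U) (E i ⁻¹' V) (hU.preimage (hEcont i))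
        (hV.preimage (hEcont i))
      simpa [Set.preimage_union, Set.preimage_inter] using this
  have hscottL : ScottContOnOpens νL := by
    refine ⟨hmonoL, ?_⟩
    intro S hSne hSopen hSdir
    have hstep : ∀ i : I, ν i (E i ⁻¹' ⋃₀ S) = ⨆ U ∈ S, ν i (E i ⁻¹' U) := by
      intro i
      have h1 : E i ⁻¹' ⋃₀ S = ⋃₀ ((fun U => E i ⁻¹' U) '' S) := by
        rw [Set.sUnion_image, Set.sUnion_eq_biUnion]
        simp [Set.preimage_iUnion]
      rw [h1, (hν i).2.2 _ (hSne.image _)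
        (by rintro _ ⟨U, hU, rfl⟩; exact (hSopen U hU).preimage (hEcont i))
        (by rintro _ ⟨U, hU, rfl⟩ _ ⟨V, hV, rfl⟩
            obtain ⟨W, hW, hUW, hVW⟩ := hSdir U hU V hV
            exact ⟨E i ⁻¹' W, Set.mem_image_of_mem _ hW,
              Set.preimage_mono hUW, Set.preimage_mono hVW⟩)]
      rw [iSup_image]
    show (⨆ i, ν i (E i ⁻¹' ⋃₀ S)) = _
    simp only [hstep]
    rw [iSup_comm]
    apply iSup_congr
    intro U
    rw [iSup_comm]
  refine ⟨νL, ⟨hvalL, hscottL⟩, fun i V hV => hprojP i V hV, fun U hU => rfl,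
    fun U hU i j h => hidx U hU i j h, ?_⟩
  -- uniqueness
  intro νL' hνL' hproj' U hU
  set S : Set (Set (projLim X p)) := Set.range (fun i : I => π i ⁻¹' (E i ⁻¹' U))
    with hS
  have hUS : U = ⋃₀ S := by
    rw [hS, Set.sUnion_range]; exact hcover U hU
  have hSopen : ∀ V ∈ S, IsOpen V := by
    rintro _ ⟨i, rfl⟩
    exact (hU.preimage (hEcont i)).preimage (hπcont i)
  have hSdir : DirectedOn (· ⊆ ·) S := by
    rintro _ ⟨i, rfl⟩ _ ⟨j, rfl⟩
    obtain ⟨k, hik, hjk⟩ := directed_of (· ≤ ·) i j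
    exact ⟨_, ⟨k, rfl⟩, hmonoset U hU i k hik, hmonoset U hU j k hjk⟩
  calc νL' U = νL' (⋃₀ S) := by rw [← hUS]
    _ = ⨆ V ∈ S, νL' V := hνL'.2.2 S (Set.range_nonempty _) hSopen hSdir
    _ = ⨆ i : I, νL' (π i ⁻¹' (E i ⁻¹' U)) := by rw [hS, iSup_range]
    _ = ⨆ i : I, ν i (E i ⁻¹' U) := by
        congr 1; funext i
        exact (hproj' i (E i ⁻¹' U) (hU.preimage (hEcont i))).symm
    _ = νL U := rfl
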